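/- The trussness gain function TG(·,G) is not submodular: there exists a finite simple graph G and disjoint singleton anchor sets A and B such that TG(A,G) + TG(B,G) < TG(A∪B,G) + TG(A∩B,G). -/

import Mathlib

variable {V : Type*}

/-- Support of an (unordered) edge in graph `H`: number of common neighbors. -/
noncomputable def esupp [Fintype V] (H : SimpleGraph V) : Sym2 V → ℕ :=
  Sym2.lift ⟨fun u v => Nat.card {w : V // H.Adj u w ∧ H.Adj v w},
    fun _ _ => Nat.card_congr (Equiv.subtypeEquivRight fun _ => and_comm)⟩

/-- `H` is a subgraph of `G` in which every edge has support at least `k-2`. -/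
def IsTrussSub [Fintype V] (G H : SimpleGraph V) (k : ℕ) : Prop :=
  H ≤ G ∧ ∀ e ∈ H.edgeSet, k - 2 ≤ esupp H e

/-- Trussness of an edge: the largest `k` such that some subgraph witnessing
the `k`-truss support condition contains it. -/
noncomputable def etruss [Fintype V] (G : SimpleGraph V) (e : Sym2 V) : ℕ :=
  sSup {k | ∃ H, IsTrussSub G H k ∧ e ∈ H.edgeSet}

/-- The `k`-truss of `G`: the maximal subgraph in which every edge has support `≥ k-2`. -/
noncomputable def trussG [Fintype V] (G : SimpleGraph V) (k : ℕ) : SimpleGraph V :=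
  sSup {H | IsTrussSub G H k}

/-- Anchored truss-subgraph: edges in the anchor set `A` are exempt from the
support constraint. -/
def IsATrussSub [Fintype V] (G H : SimpleGraph V) (A : Set (Sym2 V)) (k : ℕ) : Prop :=
  H ≤ G ∧ ∀ e ∈ H.edgeSet, e ∈ A ∨ k - 2 ≤ esupp H e

/-- Anchored trussness `t^A(e)`. -/
noncomputable def atruss [Fintype V] (G : SimpleGraph V) (A : Set (Sym2 V)) (e : Sym2 V) : ℕ :=
  sSup {k | ∃ H, IsATrussSub G H A k ∧ e ∈ H.edgeSet}

/-- The anchored `k`-truss of `G` with anchor set `A`. -/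
noncomputable def atrussGraph [Fintype V] (G : SimpleGraph V) (A : Set (Sym2 V)) (k : ℕ) :
    SimpleGraph V :=
  sSup {H | IsATrussSub G H A k}

/-- Trussness gain: total increment of trussness over all non-anchor edges. -/
noncomputable def TG [Fintype V] (G : SimpleGraph V) (A : Set (Sym2 V)) : ℕ :=
  ∑ e ∈ (G.edgeSet \ A).toFinite.toFinset, (atruss G A e - etruss G e)

/-- `a b c` form a triangle in `G`. -/
def IsTri (G : SimpleGraph V) (a b c : V) : Prop := G.Adj a b ∧ G.Adj b c ∧ G.Adj a c

/-- The three edges of the triangle on `a b c`. -/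
def triE (a b c : V) : Set (Sym2 V) := {s(a, b), s(b, c), s(a, c)}

/-- Two edges lie in a common triangle of `G`. -/
def ShareTri (G : SimpleGraph V) (e f : Sym2 V) : Prop :=
  ∃ a b c, IsTri G a b c ∧ e ∈ triE a b c ∧ f ∈ triE a b c

/-- Triangle connectivity: chain of triangles, consecutive ones sharing an edge. -/
def TriConn (G : SimpleGraph V) : Sym2 V → Sym2 V → Prop := Relation.TransGen (ShareTri G)

/-- A `k`-truss component: a truss-subgraph whose edges are pairwise
triangle-connected within it, maximal with these properties. -/
def IsTrussComponent [Fintype V] (G S : SimpleGraph V) (k : ℕ) : Prop :=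
  IsTrussSub G S k ∧
  (∀ e ∈ S.edgeSet, ∀ f ∈ S.edgeSet, e = f ∨ TriConn S e f) ∧
  ∀ S', IsTrussSub G S' k →
    (∀ e ∈ S'.edgeSet, ∀ f ∈ S'.edgeSet, e = f ∨ TriConn S' e f) → S ≤ S' → S' = S

/-! Take `K₅` on `{0, …, 4}` minus the edge `12`, and join a new vertex `5` to `0`, `1`, `2`
(writing `ij` for `s(i, j)`). The `K₅ - 12` edges have trussness 4, the spokes `05`, `15`, `25`
trussness 3. Anchoring one spoke, say `15`, gains nothing: at level 4 the spoke `25` lies in the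
single triangle `025` and is peeled, after which `05` keeps only the triangle `015` and is peeled
too; at level 5 peeling leaves nothing but anchors. Anchoring both `15` and `25` lets `05` keep
its two triangles `015` and `025`, so `05` reaches trussness 4 and the gain of the pair is
positive, while the gains of the singletons and of `∅` vanish. -/

section AnchoredTruss

variable [Fintype V] {G H K : SimpleGraph V} {A B : Set (Sym2 V)} {k : ℕ} {e : Sym2 V}

theorem esupp_eq_card (H : SimpleGraph V) [DecidableRel H.Adj] (u v : V) :
    esupp H s(u, v) = Fintype.card {w // H.Adj u w ∧ H.Adj v w} :=
  Nat.card_eq_fintype_card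

theorem esupp_mono (h : H ≤ K) (e : Sym2 V) : esupp H e ≤ esupp K e := by
  induction e using Sym2.ind with
  | _ u v =>
    exact Nat.card_le_card_of_injective (Subtype.map id fun _ hw => ⟨h hw.1, h hw.2⟩)
      (Subtype.map_injective _ Function.injective_id)

theorem esupp_le_card (H : SimpleGraph V) (e : Sym2 V) : esupp H e ≤ Fintype.card V := by
  induction e using Sym2.ind with
  | _ u v => exact (Finite.card_subtype_le _).trans Nat.card_eq_fintype_card.le

theorem isATrussSub_of_adj (hle : H ≤ G)
    (h : ∀ u v, H.Adj u v → s(u, v) ∈ A ∨ k - 2 ≤ esupp H s(u, v)) : IsATrussSub G H A k :=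
  ⟨hle, fun e he => by induction e using Sym2.ind with | _ u v => exact h u v he⟩

theorem isATrussSub_empty : IsATrussSub G H ∅ k ↔ IsTrussSub G H k := by
  simp [IsATrussSub, IsTrussSub]

namespace IsATrussSub

theorem mono_anchor (h : IsATrussSub G H A k) (hAB : A ⊆ B) : IsATrussSub G H B k :=
  ⟨h.1, fun e he => (h.2 e he).imp_left (@hAB e)⟩

theorem mono (h : IsATrussSub G H A k) {j : ℕ} (hjk : j ≤ k) : IsATrussSub G H A j :=
  ⟨h.1, fun e he => (h.2 e he).imp_right (le_trans (Nat.sub_le_sub_right hjk 2))⟩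

theorem le_of_peel (h : IsATrussSub G H A k) (hHK : H ≤ K) {K' : SimpleGraph V}
    (hpeel : ∀ u v, K.Adj u v → ¬ K'.Adj u v → s(u, v) ∉ A ∧ esupp K s(u, v) + 2 < k) :
    H ≤ K' := by
  intro u v huv
  by_contra hK'
  obtain ⟨hA, hlt⟩ := hpeel u v (hHK huv) hK'
  have hsupp := (h.2 s(u, v) huv).resolve_left hA
  have hmono := esupp_mono hHK s(u, v)
  omega

end IsATrussSub

theorem bddAbove_atruss (he : e ∉ A) :
    BddAbove {k | ∃ H, IsATrussSub G H A k ∧ e ∈ H.edgeSet} := by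
  refine ⟨Fintype.card V + 2, ?_⟩
  rintro k ⟨H, hH, heH⟩
  have hsupp := (hH.2 e heH).resolve_left he
  have hcard := esupp_le_card H e
  omega

theorem IsATrussSub.le_atruss (h : IsATrussSub G H A k) (he : e ∈ H.edgeSet) (heA : e ∉ A) :
    k ≤ atruss G A e :=
  le_csSup (bddAbove_atruss heA) ⟨H, h, he⟩

theorem atruss_le (h : ∀ H, IsATrussSub G H A (k + 1) → e ∉ H.edgeSet) : atruss G A e ≤ k :=
  csSup_le' fun _ ⟨H, hH, he⟩ => by
    by_contra! hj
    exact h H (hH.mono hj) he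

theorem atruss_empty (G : SimpleGraph V) : atruss G ∅ = etruss G := by
  funext e
  simp only [atruss, etruss, isATrussSub_empty]

theorem TG_empty (G : SimpleGraph V) : TG G ∅ = 0 := by
  simp [TG, atruss_empty]

theorem TG_eq_zero (h : ∀ e ∈ G.edgeSet, e ∉ A → atruss G A e ≤ etruss G e) : TG G A = 0 :=
  Finset.sum_eq_zero fun e he => by
    rw [Set.Finite.mem_toFinset] at he
    exact Nat.sub_eq_zero_of_le (h e he.1 he.2)

theorem TG_pos (he : e ∈ G.edgeSet) (heA : e ∉ A) (h : etruss G e < atruss G A e) :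
    0 < TG G A :=
  Finset.sum_pos' (fun _ _ => Nat.zero_le _)
    ⟨e, (Set.Finite.mem_toFinset _).2 ⟨he, heA⟩, Nat.sub_pos_of_lt h⟩

end AnchoredTruss

def gainGraph : SimpleGraph (Fin 6) := SimpleGraph.fromEdgeSet
  {s(0, 1), s(0, 2), s(0, 3), s(0, 4), s(1, 3), s(1, 4), s(2, 3), s(2, 4), s(3, 4),
    s(0, 5), s(1, 5), s(2, 5)}

instance : DecidableRel gainGraph.Adj := by unfold gainGraph; infer_instance

def gainGraphCore : SimpleGraph (Fin 6) := gainGraph.deleteEdges {s(0, 5), s(1, 5), s(2, 5)}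

theorem isATrussSub_gainGraph_three : IsATrussSub gainGraph gainGraph ∅ 3 :=
  isATrussSub_of_adj le_rfl (by simp only [esupp_eq_card]; decide)

theorem isATrussSub_gainGraphCore_four : IsATrussSub gainGraph gainGraphCore ∅ 4 :=
  isATrussSub_of_adj (gainGraph.deleteEdges_le _)
    (by unfold gainGraphCore; simp only [esupp_eq_card]; decide)

theorem isATrussSub_gainGraph_anchor_four :
    IsATrussSub gainGraph gainGraph {s(1, 5), s(2, 5)} 4 :=
  isATrussSub_of_adj le_rfl (by simp only [esupp_eq_card]; decide)

theorem le_of_isATrussSub_gainGraph_five {H : SimpleGraph (Fin 6)}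
    (h : IsATrussSub gainGraph H {s(1, 5), s(2, 5)} 5) :
    H ≤ SimpleGraph.fromEdgeSet {s(1, 5), s(2, 5)} :=
  h.le_of_peel
    (h.le_of_peel h.1 (K' := gainGraph.deleteEdges {s(0, 5), s(1, 3), s(1, 4), s(2, 3), s(2, 4)})
      (by simp only [esupp_eq_card]; decide))
    (by simp only [esupp_eq_card]; decide)

theorem le_of_isATrussSub_gainGraph_four {H : SimpleGraph (Fin 6)} {c d : Fin 6}
    (hcd : c = 1 ∧ d = 2 ∨ c = 2 ∧ d = 1) (h : IsATrussSub gainGraph H {s(c, 5)} 4) :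
    H ≤ gainGraph.deleteEdges {s(0, 5), s(d, 5)} := by
  refine h.le_of_peel (h.le_of_peel h.1 (K' := gainGraph.deleteEdges {s(d, 5)}) ?_) ?_ <;>
    simp only [esupp_eq_card] <;> rcases hcd with ⟨rfl, rfl⟩ | ⟨rfl, rfl⟩ <;> decide

theorem TG_gainGraph_singleton {c d : Fin 6} (hcd : c = 1 ∧ d = 2 ∨ c = 2 ∧ d = 1) :
    TG gainGraph {s(c, 5)} = 0 := by
  have hanchor : ({s(c, 5)} : Set (Sym2 (Fin 6))) ⊆ {s(1, 5), s(2, 5)} := by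
    rcases hcd with ⟨rfl, rfl⟩ | ⟨rfl, rfl⟩ <;> simp
  refine TG_eq_zero fun e he heA => ?_
  by_cases hcore : e ∈ gainGraphCore.edgeSet
  · calc atruss gainGraph {s(c, 5)} e ≤ 4 := atruss_le fun H hH heH => by
          have hpeeled := SimpleGraph.edgeSet_mono
            (le_of_isATrussSub_gainGraph_five (hH.mono_anchor hanchor)) heH
          simp only [gainGraphCore, SimpleGraph.edgeSet_deleteEdges, Set.mem_sdiff,
            Set.mem_insert_iff, Set.mem_singleton_iff, not_or, SimpleGraph.edgeSet_fromEdgeSet,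
            Sym2.mem_diagSet] at hcore hpeeled
          tauto
      _ ≤ etruss gainGraph e := atruss_empty gainGraph ▸
          isATrussSub_gainGraphCore_four.le_atruss hcore (Set.notMem_empty e)
  · calc atruss gainGraph {s(c, 5)} e ≤ 3 := atruss_le fun H hH heH => by
          have hpeeled := SimpleGraph.edgeSet_mono (le_of_isATrussSub_gainGraph_four hcd hH) heH
          simp only [gainGraphCore, SimpleGraph.edgeSet_deleteEdges, Set.mem_sdiff,
            Set.mem_insert_iff, Set.mem_singleton_iff, not_or, not_and, Decidable.not_not]
            at hcore hpeeled heA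
          rcases hcd with ⟨rfl, rfl⟩ | ⟨rfl, rfl⟩ <;> tauto
      _ ≤ etruss gainGraph e := atruss_empty gainGraph ▸
          isATrussSub_gainGraph_three.le_atruss he (Set.notMem_empty e)

theorem TG_gainGraph_pair_pos : 0 < TG gainGraph {s(1, 5), s(2, 5)} := by
  refine TG_pos (e := s(0, 5)) (gainGraph.mem_edgeSet.2 (by decide)) (by decide) ?_
  calc etruss gainGraph s(0, 5) ≤ 3 := atruss_empty gainGraph ▸ atruss_le fun H hH heH => by
        have hpeeled := SimpleGraph.edgeSet_mono (le_of_isATrussSub_gainGraph_four (Or.inl ⟨rfl, rfl⟩)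
          (hH.mono_anchor (Set.empty_subset _))) heH
        simp at hpeeled
    _ < 4 := by norm_num
    _ ≤ atruss gainGraph {s(1, 5), s(2, 5)} s(0, 5) :=
      isATrussSub_gainGraph_anchor_four.le_atruss (gainGraph.mem_edgeSet.2 (by decide)) (by decide)

theorem stmt5 : ∃ (n : ℕ) (G : SimpleGraph (Fin n)) (a b : Sym2 (Fin n)),
    a ∈ G.edgeSet ∧ b ∈ G.edgeSet ∧ a ≠ b ∧
    TG G {a} + TG G {b} < TG G ({a} ∪ {b}) + TG G ({a} ∩ {b} : Set (Sym2 (Fin n))) := by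
  refine ⟨6, gainGraph, s(1, 5), s(2, 5), gainGraph.mem_edgeSet.2 (by decide),
    gainGraph.mem_edgeSet.2 (by decide), by decide, ?_⟩
  rw [TG_gainGraph_singleton (Or.inl ⟨rfl, rfl⟩), TG_gainGraph_singleton (Or.inr ⟨rfl, rfl⟩),
    Set.singleton_union, Set.singleton_inter_eq_empty.2 (by decide), TG_empty]
  simpa using TG_gainGraph_pair_pos
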